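/- arXiv:2303.04495 — 4 statements merged into one kernel-verified Lean document; each statement's English description precedes it below -/
import Mathlib

section
/- Let 𝒯 be a linear map on ℂ^{d×d} of the form 𝒯(A) = ∑_{m,n} 𝔭_{m,n} Π_m A Π_n with 𝔭 Hermitian and not positive semidefinite (Π_m the diagonal matrix units). Then there exist a unit vector ψ ∈ ℂ^d and a vector φ ∈ ℂ^d such that ⟨φ, 𝒯(|ψ⟩⟨ψ|) φ⟩ < 0. Concretely, if U diagonalizes 𝔭 with 𝔭 = U diag(𝔭_1,…,𝔭_d) U† and 𝔭_n < 0, one may take ψ with components ψ_m = U_{m,n}^* and φ = (1,1,…,1)^⊤. -/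
open Matrix BigOperators
open scoped ComplexOrder

noncomputable section

abbrev Mat (d : ℕ) := Matrix (Fin d) (Fin d) ℂ

/-- The diagonal matrix unit Π_m with a 1 in entry (m,m). -/
def diagUnit {d : ℕ} (m : Fin d) : Mat d := Matrix.single m m 1

/-! The map 𝒯 is the Hadamard product A ↦ 𝔭 ⊙ A, so the sum of all entries of 𝒯(|ψ⟩⟨ψ|),
i.e. ⟨φ, 𝒯(|ψ⟩⟨ψ|) φ⟩ for φ = (1,…,1), is the quadratic form ⟨v, 𝔭 v⟩ at v = ψ̄. Taking for v a
unit eigenvector of 𝔭 with a negative eigenvalue, which exists as 𝔭 is not positive semidefinite,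
makes this value that (real, negative) eigenvalue. -/

namespace Matrix

variable {n α : Type*} [Fintype n]

theorem sum_smul_single_mul_mul_single [DecidableEq n] [CommSemiring α] (p A : Matrix n n α) :
    ∑ i, ∑ j, p i j • (single i i 1 * A * single j j 1) = p ⊙ A := by
  ext k l
  simp [Matrix.sum_apply, single_mul_mul_single, single_apply, ite_and]

theorem dotProduct_hadamard_vecMulVec_mulVec [CommSemiring α] (p : Matrix n n α)
    (x y u w : n → α) :
    x ⬝ᵥ (p ⊙ vecMulVec u w) *ᵥ y = (x * u) ⬝ᵥ p *ᵥ (w * y) := by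
  simp only [dotProduct, mulVec, hadamard_apply, vecMulVec_apply, Pi.mul_apply, Finset.mul_sum]
  refine Finset.sum_congr rfl fun i _ => Finset.sum_congr rfl fun j _ => ?_
  ring

variable {𝕜 : Type*} [RCLike 𝕜] [DecidableEq n] {A : Matrix n n 𝕜}

theorem IsHermitian.exists_eigenvalues_neg (hA : A.IsHermitian) (h : ¬A.PosSemidef) :
    ∃ j, hA.eigenvalues j < 0 := by
  simpa [hA.posSemidef_iff_eigenvalues_nonneg, Pi.le_def] using h

theorem IsHermitian.star_eigenvectorBasis_dotProduct_self (hA : A.IsHermitian) (j : n) :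
    star ⇑(hA.eigenvectorBasis j) ⬝ᵥ ⇑(hA.eigenvectorBasis j) = 1 := by
  rw [dotProduct_comm, ← EuclideanSpace.inner_eq_star_dotProduct]
  simp

theorem IsHermitian.star_eigenvectorBasis_dotProduct_mulVec (hA : A.IsHermitian) (j : n) :
    star ⇑(hA.eigenvectorBasis j) ⬝ᵥ A *ᵥ ⇑(hA.eigenvectorBasis j) = hA.eigenvalues j := by
  rw [hA.mulVec_eigenvectorBasis, dotProduct_smul, hA.star_eigenvectorBasis_dotProduct_self,
    RCLike.real_smul_eq_coe_smul (K := 𝕜), smul_eq_mul, mul_one]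

end Matrix

/-- if 𝒯(A) = ∑_{m,n} 𝔭_{m,n} Π_m A Π_n with 𝔭 Hermitian but not positive
semidefinite, then there exist a unit vector ψ and a vector φ with
⟨φ, 𝒯(|ψ⟩⟨ψ|) φ⟩ < 0 (a real, negative quadratic form value). -/
theorem stmt1 {d : ℕ} (p : Mat d) (hp : p.IsHermitian) (hnp : ¬ p.PosSemidef)
    (T : Mat d → Mat d)
    (hT : ∀ A, T A = ∑ m : Fin d, ∑ n : Fin d, p m n • (diagUnit m * A * diagUnit n)) :
    ∃ (ψ φ : Fin d → ℂ), star ψ ⬝ᵥ ψ = 1 ∧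
      (star φ ⬝ᵥ (T (Matrix.vecMulVec ψ (star ψ))).mulVec φ).im = 0 ∧
      (star φ ⬝ᵥ (T (Matrix.vecMulVec ψ (star ψ))).mulVec φ).re < 0 := by
  obtain ⟨j, hj⟩ := hp.exists_eigenvalues_neg hnp
  set v : Fin d → ℂ := ⇑(hp.eigenvectorBasis j)
  have hquad : star v ⬝ᵥ p *ᵥ v = hp.eigenvalues j := hp.star_eigenvectorBasis_dotProduct_mulVec j
  have hT_value : star 1 ⬝ᵥ T (vecMulVec (star v) (star (star v))) *ᵥ 1 = hp.eigenvalues j := by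
    rw [← hquad, hT, star_one]
    simp only [diagUnit, sum_smul_single_mul_mul_single, dotProduct_hadamard_vecMulVec_mulVec,
      one_mul, mul_one, star_star]
  refine ⟨star v, 1, ?_, ?_, ?_⟩
  · rw [star_star, dotProduct_comm]
    exact hp.star_eigenvectorBasis_dotProduct_self j
  · rw [hT_value, Complex.ofReal_im]
  · rwa [hT_value, Complex.ofReal_re]
end
end

section
/- Let ℒ be a linear map on ℂ^{d×d} of the form ℒ(A) = -i[H,A] + ∑_{α,β=1}^{D} γ_{α,β} (V_α A V_β† − ½{V_β† V_α, A}), where H is Hermitian, γ ∈ ℂ^{D×D} is Hermitian, and the V_α are traceless and linearly independent. Then ℒ can be written in Lindblad (GKLS) form, i.e. as ℒ(A) = -i[H', A] + ∑_μ (L_μ A L_μ† − ½{L_μ† L_μ, A}) with H' Hermitian, if and only if the matrix γ is positive semidefinite. -/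
set_option maxRecDepth 8000
set_option maxHeartbeats 1000000

open Matrix BigOperators
open scoped ComplexOrder

noncomputable section

/-- A map is a Lindbladian if it can be written in GKLS form with some Hermitian
Hamiltonian H' and finitely many jump operators L_μ. -/
def IsLindbladian {d : ℕ} (L : Mat d → Mat d) : Prop :=
  ∃ (m : ℕ) (H' : Mat d) (J : Fin m → Mat d), H'.IsHermitian ∧
    ∀ A, L A = -Complex.I • (H' * A - A * H') +
      ∑ μ, (J μ * A * (J μ)ᴴ -
        (1/2 : ℂ) • ((J μ)ᴴ * J μ * A + A * ((J μ)ᴴ * J μ)))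

section Aux

lemma key_sum {d : ℕ} (P Q : Mat d) :
    ∑ m, ∑ n, (P * Matrix.single m n (1:ℂ) * Q : Mat d) m n = P.trace * Q.trace := by
  have h : ∀ m n, (P * Matrix.single m n (1:ℂ) * Q : Mat d) m n = P m m * Q n n := by
    intro m n
    simp [Matrix.mul_apply, Matrix.single, Finset.sum_mul, ite_and]
  simp only [h, Matrix.trace, Matrix.diag, ← Finset.sum_mul, ← Finset.mul_sum]

lemma tr_herm_zero {d : ℕ} (M : Mat d) (h : (Mᴴ * M).trace = 0) : M = 0 := by
  have h2 : (Mᴴ * M).trace = ∑ p : Fin d × Fin d, star (M p.1 p.2) * M p.1 p.2 := by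
    rw [Matrix.trace]
    simp [Matrix.diag, Matrix.mul_apply, Matrix.conjTranspose_apply, Fintype.sum_prod_type]
    rw [Finset.sum_comm]
  rw [h2] at h
  have := (dotProduct_star_self_eq_zero (v := fun p : Fin d × Fin d => M p.1 p.2)).mp h
  ext i j
  exact congrFun this (i, j)

lemma t_mid {d : ℕ} (M N X Y : Mat d) :
    ∑ m, ∑ n, (Xᴴ * (M * Matrix.single m n (1:ℂ) * N) * Y : Mat d) m n
      = (Xᴴ*M).trace * (N*Y).trace := by
  have : ∀ m n : Fin d, Xᴴ * (M * Matrix.single m n (1:ℂ) * N) * Y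
      = (Xᴴ*M) * Matrix.single m n (1:ℂ) * (N*Y) := by
    intro m n; noncomm_ring
  simp only [this]; exact key_sum _ _

lemma t_left {d : ℕ} (M X Y : Mat d) :
    ∑ m, ∑ n, (Xᴴ * (M * Matrix.single m n (1:ℂ)) * Y : Mat d) m n
      = (Xᴴ*M).trace * Y.trace := by
  have : ∀ m n : Fin d, Xᴴ * (M * Matrix.single m n (1:ℂ)) * Y
      = (Xᴴ*M) * Matrix.single m n (1:ℂ) * Y := by intro m n; noncomm_ring
  simp only [this]; exact key_sum _ _

lemma t_right {d : ℕ} (N X Y : Mat d) :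
    ∑ m, ∑ n, (Xᴴ * (Matrix.single m n (1:ℂ) * N) * Y : Mat d) m n
      = Xᴴ.trace * (N*Y).trace := by
  have : ∀ m n : Fin d, Xᴴ * (Matrix.single m n (1:ℂ) * N) * Y
      = Xᴴ * Matrix.single m n (1:ℂ) * (N*Y) := by intro m n; noncomm_ring
  simp only [this]; exact key_sum _ _

lemma sum_rot {α β γ : Type*} {M : Type*} [AddCommMonoid M] [Fintype α] [Fintype β] [Fintype γ]
    (f : α → β → γ → M) :
    ∑ a, ∑ b, ∑ c, f a b c = ∑ c, ∑ a, ∑ b, f a b c := by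
  have h1 : ∀ a, ∑ b, ∑ c, f a b c = ∑ c, ∑ b, f a b c := fun a => Finset.sum_comm
  simp_rw [h1]
  exact Finset.sum_comm

lemma sum_rot4 {α β γ δ : Type*} {M : Type*} [AddCommMonoid M]
    [Fintype α] [Fintype β] [Fintype γ] [Fintype δ]
    (f : α → β → γ → δ → M) :
    ∑ a, ∑ b, ∑ c, ∑ e, f a b c e = ∑ c, ∑ e, ∑ a, ∑ b, f a b c e := by
  rw [sum_rot (f := fun a b c => ∑ e, f a b c e)]
  exact Finset.sum_congr rfl fun c _ => sum_rot _

lemma Fex_GKLS {d k : ℕ} (H' : Mat d) (J : Fin k → Mat d) (X Y : Mat d)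
    (hX : X.trace = 0) (hY : Y.trace = 0) :
    ∑ m, ∑ n, ((Xᴴ * (-Complex.I • (H' * Matrix.single m n (1:ℂ) - Matrix.single m n (1:ℂ) * H') +
      ∑ μ, (J μ * Matrix.single m n (1:ℂ) * (J μ)ᴴ -
        (1/2 : ℂ) • ((J μ)ᴴ * J μ * Matrix.single m n (1:ℂ) + Matrix.single m n (1:ℂ) * ((J μ)ᴴ * J μ)))) * Y : Mat d)) m n
    = ∑ μ, (Xᴴ * J μ).trace * ((J μ)ᴴ * Y).trace := by
  have hXH : Xᴴ.trace = 0 := by rw [Matrix.trace_conjTranspose, hX, star_zero]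
  simp only [Matrix.mul_add, Matrix.add_mul, Matrix.mul_sub, Matrix.sub_mul,
    Matrix.mul_smul, Matrix.smul_mul, Matrix.mul_sum, Matrix.sum_mul]
  simp only [Matrix.add_apply, Matrix.sub_apply, Matrix.smul_apply, Matrix.sum_apply,
    Finset.sum_apply, smul_eq_mul]
  simp only [Finset.sum_add_distrib, Finset.sum_sub_distrib, ← Finset.mul_sum]
  rw [sum_rot (f := fun m n μ => (Xᴴ * (J μ * Matrix.single m n (1:ℂ) * (J μ)ᴴ) * Y : Mat d) m n),
      sum_rot (f := fun m n μ => (Xᴴ * ((J μ)ᴴ * J μ * Matrix.single m n (1:ℂ)) * Y : Mat d) m n),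
      sum_rot (f := fun m n μ => (Xᴴ * (Matrix.single m n (1:ℂ) * ((J μ)ᴴ * J μ)) * Y : Mat d) m n)]
  simp only [t_mid, t_left, t_right, hY, hXH, mul_zero, zero_mul, Finset.sum_const_zero]
  ring

lemma Fex_gamma {d D : ℕ} (H : Mat d) (γ : Matrix (Fin D) (Fin D) ℂ) (V : Fin D → Mat d)
    (X Y : Mat d) (hX : X.trace = 0) (hY : Y.trace = 0) :
    ∑ m, ∑ n, ((Xᴴ * (-Complex.I • (H * Matrix.single m n (1:ℂ) - Matrix.single m n (1:ℂ) * H) +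
      ∑ α, ∑ β, γ α β • (V α * Matrix.single m n (1:ℂ) * (V β)ᴴ -
        (1/2 : ℂ) • ((V β)ᴴ * V α * Matrix.single m n (1:ℂ) + Matrix.single m n (1:ℂ) * ((V β)ᴴ * V α)))) * Y : Mat d)) m n
    = ∑ α, ∑ β, γ α β * ((Xᴴ * V α).trace * ((V β)ᴴ * Y).trace) := by
  have hXH : Xᴴ.trace = 0 := by rw [Matrix.trace_conjTranspose, hX, star_zero]
  simp only [Matrix.mul_add, Matrix.add_mul, Matrix.mul_sub, Matrix.sub_mul,
    Matrix.mul_smul, Matrix.smul_mul, Matrix.mul_sum, Matrix.sum_mul]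
  simp only [Matrix.add_apply, Matrix.sub_apply, Matrix.smul_apply, Matrix.sum_apply,
    Finset.sum_apply, smul_eq_mul]
  simp only [mul_sub, mul_add]
  simp only [Finset.sum_add_distrib, Finset.sum_sub_distrib, ← Finset.mul_sum]
  rw [sum_rot4 (f := fun m n a b => γ a b * (Xᴴ * (V a * Matrix.single m n (1:ℂ) * (V b)ᴴ) * Y : Mat d) m n),
      sum_rot4 (f := fun m n a b => γ a b * (1/2 * (Xᴴ * ((V b)ᴴ * V a * Matrix.single m n (1:ℂ)) * Y : Mat d) m n)),
      sum_rot4 (f := fun m n a b => γ a b * (1/2 * (Xᴴ * (Matrix.single m n (1:ℂ) * ((V b)ᴴ * V a)) * Y : Mat d) m n))]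
  simp only [← Finset.mul_sum]
  simp only [t_mid, t_left, t_right, hY, hXH, mul_zero, zero_mul, Finset.sum_const_zero,
    sub_zero, zero_add, add_zero, neg_zero, zero_sub, neg_neg, sub_self]

end Aux

/-- ℒ(A) = -i[H,A] + ∑ γ_{αβ}(V_α A V_β† − ½{V_β†V_α, A}) with the V_α
traceless and linearly independent is a Lindbladian iff γ is positive semidefinite. -/
theorem stmt2 {d D : ℕ} (H : Mat d) (hH : H.IsHermitian)
    (γ : Matrix (Fin D) (Fin D) ℂ) (hγ : γ.IsHermitian)
    (V : Fin D → Mat d) (hV0 : ∀ α, (V α).trace = 0) (hVli : LinearIndependent ℂ V)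
    (L : Mat d → Mat d)
    (hL : ∀ A, L A = -Complex.I • (H * A - A * H) +
      ∑ α, ∑ β, γ α β • (V α * A * (V β)ᴴ -
        (1/2 : ℂ) • ((V β)ᴴ * V α * A + A * ((V β)ᴴ * V α)))) :
    IsLindbladian L ↔ γ.PosSemidef := by
  constructor
  · rintro ⟨k, H', J, hH', hJ⟩
    -- Gram matrix of the V's
    set G : Matrix (Fin D) (Fin D) ℂ := Matrix.of (fun α β => ((V α)ᴴ * V β).trace) with hGdef
    have hGunit : IsUnit G.det := by
      rw [← Matrix.isUnit_iff_isUnit_det, ← Matrix.mulVec_injective_iff_isUnit]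
      have hker : ∀ x : Fin D → ℂ, G *ᵥ x = 0 → x = 0 := by
        intro x hx
        set M : Mat d := ∑ β, x β • V β with hMdef
        have hMH : Mᴴ = ∑ α, star (x α) • (V α)ᴴ := by
          simp [hMdef, Matrix.conjTranspose_sum, Matrix.conjTranspose_smul]
        have htr : (Mᴴ * M).trace = star x ⬝ᵥ (G *ᵥ x) := by
          rw [hMH, hMdef]
          simp only [Finset.sum_mul, Finset.mul_sum, Matrix.smul_mul, Matrix.mul_smul,
            smul_smul, Matrix.trace_sum, Matrix.trace_smul]
          simp only [dotProduct, Matrix.mulVec, dotProduct, hGdef,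
            Matrix.of_apply, Finset.mul_sum, smul_eq_mul, Pi.star_apply]
          rw [Finset.sum_comm]
          exact Finset.sum_congr rfl fun α _ => Finset.sum_congr rfl fun β _ => by ring
        rw [hx, dotProduct_zero] at htr
        have hM0 : M = 0 := tr_herm_zero M htr
        have hli := Fintype.linearIndependent_iff.mp hVli
        exact funext (hli x (by rw [← hMdef]; exact hM0))
      intro x y hxy
      have : G *ᵥ (x - y) = 0 := by
        rw [Matrix.mulVec_sub, hxy, sub_self]
      have := hker _ this
      exact sub_eq_zero.mp this
    have hGinv : G⁻¹ * G = 1 := Matrix.nonsing_inv_mul G hGunit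
    -- dual family
    set W : Fin D → Mat d := fun α => ∑ β, star (G⁻¹ α β) • V β with hWdef
    have hWtr : ∀ α, (W α).trace = 0 := by
      intro α
      simp [hWdef, Matrix.trace_sum, Matrix.trace_smul, hV0]
    have hWH : ∀ α, (W α)ᴴ = ∑ β, G⁻¹ α β • (V β)ᴴ := by
      intro α
      simp [hWdef, Matrix.conjTranspose_sum, Matrix.conjTranspose_smul]
    have hWV : ∀ α β, ((W α)ᴴ * V β).trace = (1 : Matrix (Fin D) (Fin D) ℂ) α β := by
      intro α β
      rw [hWH]
      simp only [Finset.sum_mul, Matrix.smul_mul, Matrix.trace_sum, Matrix.trace_smul,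
        smul_eq_mul]
      rw [← hGinv]
      simp [Matrix.mul_apply, hGdef]
    have hVW : ∀ α β, ((V β)ᴴ * W α).trace = (1 : Matrix (Fin D) (Fin D) ℂ) α β := by
      intro α β
      have : (V β)ᴴ * W α = ((W α)ᴴ * V β)ᴴ := by
        rw [Matrix.conjTranspose_mul, Matrix.conjTranspose_conjTranspose]
      rw [this, Matrix.trace_conjTranspose, hWV]
      by_cases h : α = β <;> simp [h, Matrix.one_apply]
    -- the extraction
    set B : Matrix (Fin k) (Fin D) ℂ := Matrix.of (fun μ α => ((J μ)ᴴ * W α).trace) with hBdef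
    have hγB : γ = Bᴴ * B := by
      ext α β
      have e1 : ∑ m, ∑ n, ((W α)ᴴ * L (Matrix.single m n (1:ℂ)) * (W β) : Mat d) m n
          = ∑ a, ∑ b, γ a b * (((W α)ᴴ * V a).trace * ((V b)ᴴ * W β).trace) := by
        simp only [hL]
        exact Fex_gamma H γ V (W α) (W β) (hWtr α) (hWtr β)
      have e2 : ∑ m, ∑ n, ((W α)ᴴ * L (Matrix.single m n (1:ℂ)) * (W β) : Mat d) m n
          = ∑ μ, ((W α)ᴴ * J μ).trace * ((J μ)ᴴ * W β).trace := by
        simp only [hJ]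
        exact Fex_GKLS H' J (W α) (W β) (hWtr α) (hWtr β)
      have e3 : ∑ a, ∑ b, γ a b * (((W α)ᴴ * V a).trace * ((V b)ᴴ * W β).trace) = γ α β := by
        simp only [hWV, hVW]
        simp [Matrix.one_apply, Finset.sum_ite_eq, Finset.sum_ite_eq']
      have e4 : ∑ μ, ((W α)ᴴ * J μ).trace * ((J μ)ᴴ * W β).trace = (Bᴴ * B) α β := by
        rw [Matrix.mul_apply]
        refine Finset.sum_congr rfl fun μ _ => ?_
        have : ((W α)ᴴ * J μ).trace = star (((J μ)ᴴ * W α).trace) := by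
          rw [← Matrix.trace_conjTranspose, Matrix.conjTranspose_mul,
            Matrix.conjTranspose_conjTranspose]
        rw [this]
        simp [hBdef, Matrix.conjTranspose_apply]
      rw [← e3, ← e1, e2, e4]
    rw [hγB]
    exact Matrix.posSemidef_conjTranspose_mul_self B
  · rintro hpsd
    obtain ⟨B, hB⟩ : ∃ B : Matrix (Fin D) (Fin D) ℂ, γ = Bᴴ * B := by
      classical
      open scoped MatrixOrder in
      obtain ⟨X, hX, -, hXX⟩ := CFC.exists_sqrt_of_isSelfAdjoint_of_quasispectrumRestricts
        hpsd.isHermitian (QuasispectrumRestricts.nnreal_of_nonneg hpsd.nonneg)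
      exact ⟨X, by rw [← hXX]; exact congrArg (· * X) hX.star_eq.symm⟩
    refine ⟨D, H, fun μ => ∑ α, star (B μ α) • V α, hH, fun A => ?_⟩
    rw [hL A]
    congr 1
    set J : Fin D → Mat d := fun μ => ∑ α, star (B μ α) • V α with hJdef
    have hJc : ∀ μ, (J μ)ᴴ = ∑ β, B μ β • (V β)ᴴ := by
      intro μ
      simp [hJdef, Matrix.conjTranspose_sum, Matrix.conjTranspose_smul]
    have hcoef : ∀ a b : Fin D, ∑ μ, star (B μ a) * B μ b = γ a b := by
      intro a b
      rw [hB, Matrix.mul_apply]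
      exact Finset.sum_congr rfl fun μ _ => by simp [Matrix.conjTranspose_apply]
    have key1 : ∑ μ, J μ * A * (J μ)ᴴ = ∑ a, ∑ b, γ a b • (V a * A * (V b)ᴴ) := by
      have h1 : ∀ μ, J μ * A * (J μ)ᴴ
          = ∑ a, ∑ b, (star (B μ a) * B μ b) • (V a * A * (V b)ᴴ) := by
        intro μ
        rw [hJc, hJdef]
        simp only [Finset.sum_mul, Matrix.mul_sum, Matrix.smul_mul, Matrix.mul_smul,
          smul_smul]
        exact Finset.sum_congr rfl fun a _ => Finset.sum_congr rfl fun b _ => by rw [mul_comm]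
      simp only [h1]
      rw [← sum_rot (f := fun a b μ => (star (B μ a) * B μ b) • (V a * A * (V b)ᴴ))]
      refine Finset.sum_congr rfl fun a _ => Finset.sum_congr rfl fun b _ => ?_
      rw [← hcoef a b, Finset.sum_smul]
    have key2 : ∑ μ, (J μ)ᴴ * J μ = ∑ a, ∑ b, γ a b • ((V b)ᴴ * V a) := by
      have h2 : ∀ μ, (J μ)ᴴ * J μ
          = ∑ a, ∑ b, (star (B μ a) * B μ b) • ((V b)ᴴ * V a) := by
        intro μ
        rw [hJc, hJdef]
        simp only [Finset.sum_mul, Matrix.mul_sum, Matrix.smul_mul, Matrix.mul_smul,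
          smul_smul]
        exact Finset.sum_comm
      simp only [h2]
      rw [← sum_rot (f := fun a b μ => (star (B μ a) * B μ b) • ((V b)ᴴ * V a))]
      refine Finset.sum_congr rfl fun a _ => Finset.sum_congr rfl fun b _ => ?_
      rw [← hcoef a b, Finset.sum_smul]
    calc ∑ α, ∑ β, γ α β • (V α * A * (V β)ᴴ -
          (1/2 : ℂ) • ((V β)ᴴ * V α * A + A * ((V β)ᴴ * V α)))
        = (∑ a, ∑ b, γ a b • (V a * A * (V b)ᴴ)) - (1/2 : ℂ) •
            ((∑ a, ∑ b, γ a b • ((V b)ᴴ * V a)) * A + A * (∑ a, ∑ b, γ a b • ((V b)ᴴ * V a))) := by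
          simp only [smul_sub, smul_add, Finset.sum_sub_distrib, Finset.sum_add_distrib,
            Matrix.sum_mul, Matrix.mul_sum, Matrix.smul_mul, Matrix.mul_smul, smul_smul,
            Finset.smul_sum]
          congr 1
          · congr 1 <;>
            · refine Finset.sum_congr rfl fun a _ => Finset.sum_congr rfl fun b _ => ?_
              rw [mul_comm]
      _ = (∑ μ, J μ * A * (J μ)ᴴ) - (1/2 : ℂ) •
            ((∑ μ, (J μ)ᴴ * J μ) * A + A * (∑ μ, (J μ)ᴴ * J μ)) := by
          rw [key1, key2]
      _ = ∑ μ, (J μ * A * (J μ)ᴴ - (1/2 : ℂ) • ((J μ)ᴴ * J μ * A + A * ((J μ)ᴴ * J μ))) := by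
          simp only [Finset.sum_sub_distrib, Finset.smul_sum, Finset.sum_add_distrib,
            Matrix.sum_mul, Matrix.mul_sum, smul_add]
end
end

section
/- Consider the qubit evolution with Bloch vector r(t) ∈ ℝ³ obeying dr_x/dt = −r_x/T_2 − ω r_y, dr_y/dt = −r_y/T_2 + ω r_x, dr_z/dt = −(r_z − R_z)/T_1, with 1/T_1 = γ_− + γ_+, 1/T_2 = 1/(2T_1) + 2γ_φ, R_z = −(γ_− − γ_+)T_1, where γ_± > 0, and γ_φ ∈ ℝ satisfies γ_− γ_+ > 4γ_φ² and (γ_− + γ_+)/2 > 2γ_φ. Then whenever |r(t)|² = 1, one has d(|r|²)/dt < 0; hence the closed unit ball is positively invariant: if |r(0)| ≤ 1 then |r(t)| ≤ 1 for all t ≥ 0. In particular the evolution preserves positivity of the corresponding density matrix even when γ_φ < 0. -/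
open BigOperators

/-- for the Bloch equations dr_x/dt = −r_x/T₂ − ω r_y,
dr_y/dt = −r_y/T₂ + ω r_x, dr_z/dt = −(r_z − R_z)/T₁ with 1/T₁ = γ₋+γ₊,
1/T₂ = 1/(2T₁)+2γ_φ, R_z = −(γ₋−γ₊)T₁, γ_± > 0, γ₋γ₊ > 4γ_φ² and (γ₋+γ₊)/2 > 2γ_φ:
whenever |r(t)|² = 1 one has d(|r|²)/dt < 0, and the closed unit ball is positively
invariant (positivity of the qubit state is preserved). -/
theorem stmt8 (ω γm γp γφ T₁ T₂ Rz : ℝ)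
    (hγm : 0 < γm) (hγp : 0 < γp)
    (hdet : 4 * γφ ^ 2 < γm * γp) (hΔ : 2 * γφ < (γm + γp) / 2)
    (hT₁ : T₁ = (γm + γp)⁻¹) (hT₂ : 1 / T₂ = 1 / (2 * T₁) + 2 * γφ)
    (hRz : Rz = -(γm - γp) * T₁)
    (rx ry rz : ℝ → ℝ)
    (hx : ∀ t, HasDerivAt rx (-(rx t) / T₂ - ω * ry t) t)
    (hy : ∀ t, HasDerivAt ry (-(ry t) / T₂ + ω * rx t) t)
    (hz : ∀ t, HasDerivAt rz (-(rz t - Rz) / T₁) t) :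
    (∀ t, rx t ^ 2 + ry t ^ 2 + rz t ^ 2 = 1 →
      deriv (fun s => rx s ^ 2 + ry s ^ 2 + rz s ^ 2) t < 0) ∧
    (rx 0 ^ 2 + ry 0 ^ 2 + rz 0 ^ 2 ≤ 1 →
      ∀ t ≥ (0 : ℝ), rx t ^ 2 + ry t ^ 2 + rz t ^ 2 ≤ 1) := by
  have ha : 0 < γm + γp := by linarith
  have hb : 0 < (γm + γp) / 2 + 2 * γφ := by
    nlinarith [sq_nonneg (γm - γp), sq_nonneg (γm + γp + 4 * γφ)]
  have hT₁pos : 0 < T₁ := by rw [hT₁]; positivity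
  have hT₂' : 1 / T₂ = (γm + γp) / 2 + 2 * γφ := by
    rw [hT₂, hT₁]; field_simp
  have hT₂ne : T₂ ≠ 0 := by
    intro h; rw [h] at hT₂'; simp at hT₂'; linarith
  have ediv2 : ∀ x : ℝ, x / T₂ = x * ((γm + γp) / 2 + 2 * γφ) := by
    intro x; rw [div_eq_mul_inv, ← one_div, hT₂']
  have ediv1 : ∀ x : ℝ, x / T₁ = x * (γm + γp) := by
    intro x; rw [hT₁, div_eq_mul_inv, inv_inv]
  have hRz' : Rz * (γm + γp) = -(γm - γp) := by
    rw [hRz, hT₁]; field_simp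
  -- the derivative of g
  have key : ∀ t, HasDerivAt (fun s => rx s ^ 2 + ry s ^ 2 + rz s ^ 2)
      ((2 : ℕ) * rx t ^ 1 * (-(rx t) / T₂ - ω * ry t)
        + (2 : ℕ) * ry t ^ 1 * (-(ry t) / T₂ + ω * rx t)
        + (2 : ℕ) * rz t ^ 1 * (-(rz t - Rz) / T₁)) t := fun t =>
    (((hx t).pow 2).add ((hy t).pow 2)).add ((hz t).pow 2)
  -- whenever g t ≥ 1, derivative < 0
  have main : ∀ t, 1 ≤ rx t ^ 2 + ry t ^ 2 + rz t ^ 2 →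
      (2 : ℕ) * rx t ^ 1 * (-(rx t) / T₂ - ω * ry t)
        + (2 : ℕ) * ry t ^ 1 * (-(ry t) / T₂ + ω * rx t)
        + (2 : ℕ) * rz t ^ 1 * (-(rz t - Rz) / T₁) < 0 := by
    intro t hineq
    have e1 := ediv2 (-(rx t))
    have e2 := ediv2 (-(ry t))
    have e3 := ediv1 (-(rz t - Rz))
    have hRzrz : rz t * (Rz * (γm + γp)) = rz t * (-(γm - γp)) := by rw [hRz']
    push_cast
    rw [e1, e2, e3]
    nlinarith [sq_nonneg (((γm + γp) - 4 * γφ) * rz t + (γm - γp)), sq_nonneg (rz t),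
      mul_le_mul_of_nonneg_left hineq (le_of_lt hb), hRzrz]
  constructor
  · intro t ht
    rw [(key t).deriv]
    exact main t ht.ge
  · intro h0 t ht
    by_contra hgt
    push_neg at hgt
    set g : ℝ → ℝ := fun s => rx s ^ 2 + ry s ^ 2 + rz s ^ 2 with hg
    have hgc : Continuous g := by
      rw [continuous_iff_continuousAt]; exact fun s => (key s).continuousAt
    set S : Set ℝ := Set.Icc 0 t ∩ g ⁻¹' Set.Iic 1 with hS
    have hSc : IsClosed S := isClosed_Icc.inter (isClosed_Iic.preimage hgc)
    have h0S : (0 : ℝ) ∈ S := ⟨⟨le_refl 0, ht⟩, h0⟩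
    have hSbdd : BddAbove S := BddAbove.mono Set.inter_subset_left bddAbove_Icc
    set u := sSup S with hu
    have huS : u ∈ S := hSc.csSup_mem ⟨0, h0S⟩ hSbdd
    have hgu_le : g u ≤ 1 := huS.2
    have hu_le : u ≤ t := huS.1.2
    have hu0 : 0 ≤ u := huS.1.1
    have hu_lt : u < t := by
      rcases lt_or_eq_of_le hu_le with h | h
      · exact h
      · exfalso; rw [h] at hgu_le; exact absurd hgu_le (not_le.mpr hgt)
    -- eventually to the right of u, g < 1
    have hEv : ∀ᶠ s in nhdsWithin u (Set.Ioi u), g s < 1 := by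
      rcases lt_or_eq_of_le hgu_le with hlt | heq
      · have : ∀ᶠ s in nhds u, g s < 1 :=
          (hgc.continuousAt (x := u)).eventually_lt_const hlt
        exact this.filter_mono nhdsWithin_le_nhds
      · -- g u = 1, use negative derivative
        have hd := key u
        have hdneg := main u heq.ge
        have hsl : Filter.Tendsto (slope g u) (nhdsWithin u {u}ᶜ) (nhds _) :=
          hasDerivAt_iff_tendsto_slope.mp hd
        have hsl' : Filter.Tendsto (slope g u) (nhdsWithin u (Set.Ioi u)) (nhds _) :=
          hsl.mono_left (nhdsWithin_mono u (fun x hx => ne_of_gt hx))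
        have hEv' : ∀ᶠ s in nhdsWithin u (Set.Ioi u), slope g u s < 0 :=
          hsl'.eventually_lt_const hdneg
        have hEv'' : ∀ᶠ s in nhdsWithin u (Set.Ioi u), u < s :=
          eventually_mem_nhdsWithin
        filter_upwards [hEv', hEv''] with s hs1 hs2
        have hsu : (0:ℝ) < s - u := by linarith
        have hslope : (g s - g u) / (s - u) < 0 := by
          rwa [slope_def_field] at hs1
        have hlt : g s - g u < 0 := by
          by_contra hge
          push_neg at hge
          exact absurd (div_nonneg hge hsu.le) (not_le.mpr hslope)
        linarith [heq ▸ hlt]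
    have hIoc : Set.Ioc u t ∈ nhdsWithin u (Set.Ioi u) :=
      Ioc_mem_nhdsGT_of_mem ⟨le_refl u, hu_lt⟩
    obtain ⟨s, hs1, hs2⟩ := (hEv.and (Filter.eventually_of_mem hIoc (fun _ h => h))).exists
    have hsS : s ∈ S := ⟨⟨le_trans hu0 hs2.1.le, hs2.2⟩, hs1.le⟩
    have : s ≤ u := le_csSup hSbdd hsS
    linarith [hs2.1]
end

section
/- Let ℋ_A and ℋ_B be finite-dimensional Hilbert spaces with dim ℋ_B ≥ 2, and let Φ be a linear map from operators on ℋ_B to operators on ℋ_A ⊗ ℋ_B. Then the following are equivalent: (i) Φ is consistent (tr_A ∘ Φ = id_B) and positive on states (Φ(ρ_B) is a density matrix for every density matrix ρ_B); (ii) there exists a fixed density matrix ρ_A on ℋ_A, independent of ρ_B, such that Φ(ρ_B) = ρ_A ⊗ ρ_B for every density matrix ρ_B. -/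
open Matrix BigOperators Kronecker
open scoped ComplexOrder

noncomputable section

/-- Partial trace over the first (A) factor. -/
def traceA {dA dB : ℕ} (M : Matrix (Fin dA × Fin dB) (Fin dA × Fin dB) ℂ) :
    Matrix (Fin dB) (Fin dB) ℂ :=
  Matrix.of fun i j => ∑ a : Fin dA, M (a, i) (a, j)

/-- A density matrix: positive semidefinite with unit trace. -/
def IsDensity {n : Type*} [Fintype n] (ρ : Matrix n n ℂ) : Prop :=
  ρ.PosSemidef ∧ ρ.trace = 1

namespace PJ

local notation "𝕔" => starRingEnd ℂ

variable {dA dB : ℕ}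

lemma sum_ite_push {α : Type*} [Fintype α] (c : Prop) [Decidable c] (f : α → ℂ) :
    ∑ x : α, (if c then f x else 0) = if c then ∑ x : α, f x else 0 := by
  split_ifs <;> simp

/-- Contraction of `M` against `ψ` on the `B` factor. -/
def sig (M : Matrix (Fin dA × Fin dB) (Fin dA × Fin dB) ℂ) (ψ : Fin dB → ℂ) :
    Matrix (Fin dA) (Fin dA) ℂ :=
  Matrix.of fun a b => ∑ i : Fin dB, ∑ j : Fin dB, 𝕔 (ψ i) * M (a, i) (b, j) * ψ j

lemma key_entry {M : Matrix (Fin dA × Fin dB) (Fin dA × Fin dB) ℂ} {ψ : Fin dB → ℂ}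
    (hM : M.PosSemidef) (hψ : ∑ j, 𝕔 (ψ j) * ψ j = 1)
    (hTr : traceA M = Matrix.vecMulVec ψ (star ψ)) :
    ∀ a i b j, M (a, i) (b, j) = sig M ψ a b * (ψ i * 𝕔 (ψ j)) := by
  have htr' : ∀ k l, ∑ c : Fin dA, M (c, k) (c, l) = ψ k * 𝕔 (ψ l) := by
    intro k l
    have := congrFun (congrFun (congrArg (fun X => (X : Matrix (Fin dB) (Fin dB) ℂ)) hTr) k) l
    simpa [traceA, Matrix.vecMulVec_apply, Pi.star_apply, RCLike.star_def] using this
  -- Step 1: vanishing on vectors orthogonal to ψ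
  have hker : ∀ (b : Fin dA) (w : Fin dB → ℂ), (∑ k, 𝕔 (ψ k) * w k) = 0 →
      ∀ (a : Fin dA) (i : Fin dB), ∑ k, M (a, i) (b, k) * w k = 0 := by
    intro b w hw a i
    set v : Fin dA → (Fin dA × Fin dB) → ℂ := fun c p => if p.1 = c then w p.2 else 0 with hv
    have h1 : ∀ c : Fin dA, star (v c) ⬝ᵥ M *ᵥ (v c)
        = ∑ k, ∑ l, 𝕔 (w k) * M (c, k) (c, l) * w l := by
      intro c
      simp only [dotProduct, mulVec, Pi.star_apply, hv, Fintype.sum_prod_type,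
        apply_ite, ite_mul, mul_ite, mul_zero, zero_mul, star_zero,
        sum_ite_push, Finset.sum_ite_eq', Finset.mem_univ, if_true, Finset.mul_sum,
        RCLike.star_def]
      exact Finset.sum_congr rfl fun k _ => Finset.sum_congr rfl fun l _ => by ring
    have hsum0 : ∑ c, star (v c) ⬝ᵥ M *ᵥ (v c) = 0 := by
      simp_rw [h1]
      rw [Finset.sum_comm]
      have h2 : ∀ k, ∑ c : Fin dA, ∑ l, 𝕔 (w k) * M (c, k) (c, l) * w l
          = ∑ l, 𝕔 (w k) * (ψ k * 𝕔 (ψ l)) * w l := by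
        intro k
        rw [Finset.sum_comm]
        refine Finset.sum_congr rfl fun l _ => ?_
        rw [← htr' k l, Finset.mul_sum, Finset.sum_mul]
      simp_rw [h2]
      have h3 : ∑ k, ∑ l, 𝕔 (w k) * (ψ k * 𝕔 (ψ l)) * w l
          = (∑ k, 𝕔 (w k) * ψ k) * (∑ l, 𝕔 (ψ l) * w l) := by
        rw [Finset.sum_mul_sum]
        exact Finset.sum_congr rfl fun k _ => Finset.sum_congr rfl fun l _ => by ring
      rw [h3, hw, mul_zero]
    have hQ0 : star (v b) ⬝ᵥ M *ᵥ (v b) = 0 := by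
      have hnn : ∀ c ∈ Finset.univ, (0:ℂ) ≤ star (v c) ⬝ᵥ M *ᵥ (v c) := fun c _ => hM.dotProduct_mulVec_nonneg (v c)
      exact (Finset.sum_eq_zero_iff_of_nonneg hnn).1 hsum0 b (Finset.mem_univ b)
    have hMv : M *ᵥ (v b) = 0 := (hM.dotProduct_mulVec_zero_iff (v b)).1 hQ0
    have h4 := congrFun hMv (a, i)
    have h5 : (M *ᵥ (v b)) (a, i) = ∑ k, M (a, i) (b, k) * w k := by
      simp only [mulVec, dotProduct, Fintype.sum_prod_type, hv, mul_ite, mul_zero]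
      rw [Finset.sum_eq_single b (fun d _ hd => by simp [hd]) (by simp)]
      simp
    rw [h5] at h4
    exact h4
  -- Step 2: rows proportional to conj ψ
  have hrow : ∀ (a : Fin dA) (i : Fin dB) (b : Fin dA) (j : Fin dB),
      M (a, i) (b, j) = (∑ k, M (a, i) (b, k) * ψ k) * 𝕔 (ψ j) := by
    intro a i b j
    set f := ∑ k, M (a, i) (b, k) * ψ k with hf
    set u : Fin dB → ℂ := fun k => M (a, i) (b, k) - f * 𝕔 (ψ k) with hu
    have hψu : ∑ k, ψ k * u k = 0 := by
      have h1 : ∀ k, ψ k * u k = ψ k * M (a, i) (b, k) - f * (𝕔 (ψ k) * ψ k) := by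
        intro k; simp only [hu]; ring
      simp_rw [h1]
      rw [Finset.sum_sub_distrib, ← Finset.mul_sum, hψ, mul_one]
      rw [sub_eq_zero, hf]
      exact Finset.sum_congr rfl fun k _ => mul_comm _ _
    have horth : ∑ k, 𝕔 (ψ k) * (star u) k = 0 := by
      have h1 : ∀ k, 𝕔 (ψ k) * (star u) k = 𝕔 (ψ k * u k) := by
        intro k; simp [Pi.star_apply, RCLike.star_def, _root_.map_mul]
      simp_rw [h1]
      rw [← map_sum, hψu, map_zero]
    have hz := hker b (star u) horth a i
    have hexp : ∑ k, M (a, i) (b, k) * (star u) k = ∑ k, u k * 𝕔 (u k) := by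
      have h1 : ∀ k, M (a, i) (b, k) * (star u) k
          = u k * 𝕔 (u k) + f * 𝕔 (ψ k * u k) := by
        intro k
        have : M (a, i) (b, k) = u k + f * 𝕔 (ψ k) := by simp only [hu]; ring
        rw [this]
        simp only [Pi.star_apply, RCLike.star_def, map_sub, _root_.map_mul]
        ring
      simp_rw [h1]
      rw [Finset.sum_add_distrib, ← Finset.mul_sum, ← map_sum, hψu, map_zero, mul_zero,
        add_zero]
    rw [hexp] at hz
    have hu0 : u = 0 := by
      have h2 : star u ⬝ᵥ u = 0 := by
        rw [← hz]
        simp only [dotProduct, Pi.star_apply, RCLike.star_def]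
        exact Finset.sum_congr rfl fun k _ => mul_comm _ _
      exact dotProduct_star_self_eq_zero.mp h2
    have := congrFun hu0 j
    simp only [hu, Pi.zero_apply] at this
    exact sub_eq_zero.mp this
  -- Step 3: hermitian symmetry
  have hherm : ∀ p q, M p q = 𝕔 (M q p) := by
    intro p q
    have := congrFun (congrFun hM.1 p) q
    rw [Matrix.conjTranspose_apply] at this
    exact this.symm
  set F : Fin dA → Fin dB → Fin dA → ℂ := fun a i b => ∑ k, M (a, i) (b, k) * ψ k with hF
  set G : Fin dA → Fin dA → ℂ := fun a b => ∑ k, 𝕔 (F b k a) * ψ k with hG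
  have hFG : ∀ a i b, F a i b = ψ i * G a b := by
    intro a i b
    have h1 : ∀ k, M (a, i) (b, k) * ψ k = 𝕔 (F b k a) * ψ k * ψ i := by
      intro k
      rw [hherm (a, i) (b, k), hrow b k a i]
      simp only [_root_.map_mul, Complex.conj_conj]
      ring
    calc F a i b = ∑ k, 𝕔 (F b k a) * ψ k * ψ i := Finset.sum_congr rfl fun k _ => h1 k
      _ = (∑ k, 𝕔 (F b k a) * ψ k) * ψ i := by rw [Finset.sum_mul]
      _ = ψ i * G a b := by rw [hG]; ring
  have hMG : ∀ a i b j, M (a, i) (b, j) = G a b * (ψ i * 𝕔 (ψ j)) := by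
    intro a i b j
    rw [hrow a i b j]
    have : (∑ k, M (a, i) (b, k) * ψ k) = F a i b := rfl
    rw [this, hFG a i b]
    ring
  -- Step 4: sig equals G
  intro a i b j
  have hsg : sig M ψ a b = G a b := by
    simp only [sig, Matrix.of_apply]
    have h1 : ∀ i' j' : Fin dB, 𝕔 (ψ i') * M (a, i') (b, j') * ψ j'
        = (𝕔 (ψ i') * ψ i') * G a b * (𝕔 (ψ j') * ψ j') := by
      intro i' j'
      rw [hMG a i' b j']
      ring
    simp_rw [h1]
    have h2 : ∀ i' : Fin dB, ∑ j' : Fin dB, (𝕔 (ψ i') * ψ i') * G a b * (𝕔 (ψ j') * ψ j')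
        = (𝕔 (ψ i') * ψ i') * G a b := by
      intro i'
      rw [← Finset.mul_sum, hψ, mul_one]
    simp_rw [h2]
    rw [← Finset.sum_mul, hψ, one_mul]
  rw [hsg, hMG a i b j]


lemma key_density {M : Matrix (Fin dA × Fin dB) (Fin dA × Fin dB) ℂ} {ψ : Fin dB → ℂ}
    (hM : M.PosSemidef) (hψ : ∑ j, 𝕔 (ψ j) * ψ j = 1)
    (hTr : traceA M = Matrix.vecMulVec ψ (star ψ)) :
    IsDensity (sig M ψ) := by
  have hkey := key_entry hM hψ hTr
  have htr' : ∀ k l, ∑ c : Fin dA, M (c, k) (c, l) = ψ k * 𝕔 (ψ l) := by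
    intro k l
    have := congrFun (congrFun hTr k) l
    simpa [traceA, Matrix.vecMulVec_apply, Pi.star_apply, RCLike.star_def] using this
  obtain ⟨i₀, hi₀⟩ : ∃ i₀, ψ i₀ ≠ 0 := by
    by_contra h
    push_neg at h
    rw [Finset.sum_eq_zero (fun k _ => by rw [h k, mul_zero])] at hψ
    exact zero_ne_one hψ
  have hne : ψ i₀ * 𝕔 (ψ i₀) ≠ 0 := by
    apply mul_ne_zero hi₀
    simpa using hi₀
  constructor
  · refine PosSemidef.of_dotProduct_mulVec_nonneg ?_ ?_
    · -- Hermitian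
      ext x y
      rw [Matrix.conjTranspose_apply]
      have h1 := hkey x i₀ y i₀
      have h2 := hkey y i₀ x i₀
      have h3 : M (x, i₀) (y, i₀) = 𝕔 (M (y, i₀) (x, i₀)) := by
        have := congrFun (congrFun hM.1 (x, i₀)) (y, i₀)
        rw [Matrix.conjTranspose_apply] at this
        exact this.symm
      rw [h1, h2] at h3
      simp only [_root_.map_mul, Complex.conj_conj, RCLike.star_def] at h3 ⊢
      have h4 : sig M ψ x y * (ψ i₀ * 𝕔 (ψ i₀)) = 𝕔 (sig M ψ y x) * (ψ i₀ * 𝕔 (ψ i₀)) := by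
        rw [h3]; ring
      exact (mul_right_cancel₀ hne h4).symm
    · -- quadratic form
      intro x
      set y : Fin dA × Fin dB → ℂ := fun p => x p.1 * ψ p.2 with hy
      have heq : star x ⬝ᵥ sig M ψ *ᵥ x = star y ⬝ᵥ M *ᵥ y := by
        simp only [dotProduct, mulVec, sig, Matrix.of_apply, Pi.star_apply, hy,
          Fintype.sum_prod_type, RCLike.star_def, _root_.map_mul, Finset.mul_sum,
          Finset.sum_mul]
        refine Finset.sum_congr rfl fun a _ => ?_
        rw [Finset.sum_comm]
        refine Finset.sum_congr rfl fun i _ => ?_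
        refine Finset.sum_congr rfl fun b _ => ?_
        refine Finset.sum_congr rfl fun j _ => ?_
        ring
      rw [heq]
      exact hM.dotProduct_mulVec_nonneg y
  · -- trace
    simp only [Matrix.trace, Matrix.diag, sig, Matrix.of_apply]
    rw [Finset.sum_comm]
    have h1 : ∀ i : Fin dB, ∑ a : Fin dA, ∑ j : Fin dB, 𝕔 (ψ i) * M (a, i) (a, j) * ψ j
        = ∑ j : Fin dB, 𝕔 (ψ i) * (ψ i * 𝕔 (ψ j)) * ψ j := by
      intro i
      rw [Finset.sum_comm]
      refine Finset.sum_congr rfl fun j _ => ?_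
      rw [← htr' i j, Finset.mul_sum, Finset.sum_mul]
    simp_rw [h1]
    have h2 : ∀ i : Fin dB, ∑ j : Fin dB, 𝕔 (ψ i) * (ψ i * 𝕔 (ψ j)) * ψ j
        = (𝕔 (ψ i) * ψ i) := by
      intro i
      have : ∀ j : Fin dB, 𝕔 (ψ i) * (ψ i * 𝕔 (ψ j)) * ψ j
          = (𝕔 (ψ i) * ψ i) * (𝕔 (ψ j) * ψ j) := fun j => by ring
      simp_rw [this]
      rw [← Finset.mul_sum, hψ, mul_one]
    simp_rw [h2, hψ]

lemma pure_density {n : ℕ} (v : Fin n → ℂ) (hv : ∑ k, 𝕔 (v k) * v k = 1) :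
    IsDensity (Matrix.vecMulVec v (star v)) := by
  constructor
  · refine PosSemidef.of_dotProduct_mulVec_nonneg ?_ ?_
    · ext i j
      simp only [Matrix.conjTranspose_apply, Matrix.vecMulVec_apply, Pi.star_apply,
        RCLike.star_def, _root_.map_mul, Complex.conj_conj]
      ring
    · intro x
      have heq : star x ⬝ᵥ (Matrix.vecMulVec v (star v)) *ᵥ x
          = 𝕔 (∑ k, 𝕔 (v k) * x k) * (∑ k, 𝕔 (v k) * x k) := by
        simp only [dotProduct, mulVec, Matrix.vecMulVec_apply, Pi.star_apply,
          RCLike.star_def, map_sum, _root_.map_mul, Complex.conj_conj,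
          Finset.sum_mul_sum, Finset.mul_sum]
        rw [Finset.sum_comm]
        refine Finset.sum_congr rfl fun i _ => ?_
        rw [Finset.sum_mul]
        exact Finset.sum_congr rfl fun k _ => by ring
      rw [heq]
      exact star_mul_self_nonneg _
  · simp only [Matrix.trace, Matrix.diag, Matrix.vecMulVec_apply, Pi.star_apply,
      RCLike.star_def]
    rw [← hv]
    exact Finset.sum_congr rfl fun k _ => mul_comm _ _

/-- standard basis vector -/
def ev {n : ℕ} (p : Fin n) : Fin n → ℂ := fun k => if k = p then 1 else 0

/-- two-entry vector -/
def wv {n : ℕ} (p q : Fin n) (α β : ℂ) : Fin n → ℂ :=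
  fun k => if k = p then α else if k = q then β else 0

lemma ev_unit {n : ℕ} (p : Fin n) : ∑ k, 𝕔 (ev p k) * ev p k = 1 := by
  simp [ev, apply_ite, mul_ite, Finset.sum_ite_eq']

lemma wv_unit {n : ℕ} (p q : Fin n) (hpq : p ≠ q) (α β : ℂ)
    (h : 𝕔 α * α + 𝕔 β * β = 1) : ∑ k, 𝕔 (wv p q α β k) * wv p q α β k = 1 := by
  have h1 : ∀ k, 𝕔 (wv p q α β k) * wv p q α β k
      = (if k = p then 𝕔 α * α else 0) + (if k = q then 𝕔 β * β else 0) := by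
    intro k
    by_cases h1 : k = p
    · subst h1; simp [wv, hpq]
    · by_cases h2 : k = q
      · subst h2; simp [wv, h1]
      · simp [wv, h1, h2]
  simp_rw [h1]
  rw [Finset.sum_add_distrib, Finset.sum_ite_eq', Finset.sum_ite_eq']
  simpa using h

def sC : ℂ := ((Real.sqrt 2 : ℝ) : ℂ)⁻¹

lemma sC_conj : 𝕔 sC = sC := by
  simp [sC, map_inv₀, Complex.conj_ofReal]

lemma sC_sq : sC * sC = 2⁻¹ := by
  rw [sC, ← mul_inv, ← Complex.ofReal_mul, Real.mul_self_sqrt (by norm_num : (0:ℝ) ≤ 2)]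
  norm_num

/-- rank-one projector onto a vector -/
def pmat {n : ℕ} (v : Fin n → ℂ) : Matrix (Fin n) (Fin n) ℂ := Matrix.vecMulVec v (star v)

lemma pmat_apply {n : ℕ} (v : Fin n → ℂ) (i j : Fin n) : pmat v i j = v i * 𝕔 (v j) := by
  simp [pmat, Matrix.vecMulVec_apply, RCLike.star_def]

lemma Ipm {n : ℕ} (p q : Fin n) (hpq : p ≠ q) (β : ℂ) (hβ : 𝕔 β * β = 2⁻¹) :
    pmat (wv p q sC β) + pmat (wv p q sC (-β)) = pmat (ev p) + pmat (ev q) := by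
  ext i j
  simp only [Matrix.add_apply, pmat_apply, wv, ev]
  by_cases hip : i = p <;> by_cases hiq : i = q <;> by_cases hjp : j = p <;>
    by_cases hjq : j = q <;> simp_all [map_neg, sC_conj] <;> ring_nf <;>
    first
      | linear_combination 2 * sC_sq
      | linear_combination 2 * hβ

lemma beta2 : 𝕔 (Complex.I * sC) * (Complex.I * sC) = 2⁻¹ := by
  rw [_root_.map_mul, Complex.conj_I, sC_conj]
  linear_combination (-(sC*sC)) * Complex.I_sq + sC_sq

lemma I3mat {n : ℕ} (p q : Fin n) (hpq : p ≠ q) :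
    Matrix.single p q (1:ℂ)
      = pmat (wv p q sC sC) + Complex.I • pmat (wv p q sC (Complex.I * sC))
        - ((1 + Complex.I)/2) • (pmat (ev p) + pmat (ev q)) := by
  have hqp : ¬ q = p := fun h => hpq h.symm
  have hs2p : sC ^ 2 = 2⁻¹ := by rw [pow_two]; exact sC_sq
  have hI3 : Complex.I ^ 3 = -Complex.I := by
    rw [pow_succ, Complex.I_sq]; ring
  ext i j
  simp only [Matrix.sub_apply, Matrix.add_apply, Matrix.smul_apply, pmat_apply, wv, ev,
    Matrix.single, Matrix.of_apply, smul_eq_mul]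
  by_cases hip : i = p <;> by_cases hiq : i = q <;> by_cases hjp : j = p <;>
    by_cases hjq : j = q <;>
    simp_all [map_neg, _root_.map_mul, Complex.conj_I, sC_conj] <;>
    first
      | (simp_all [eq_comm]; done)
      | (ring_nf; simp only [hs2p, Complex.I_sq, (show Complex.I ^ 3 = -Complex.I by rw [pow_succ, Complex.I_sq]; ring)]; ring_nf)

section main

variable {dA dB : ℕ}
  (Φ : Matrix (Fin dB) (Fin dB) ℂ →ₗ[ℂ] Matrix (Fin dA × Fin dB) (Fin dA × Fin dB) ℂ)

/-- the A-marginal assigned to a pure state -/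
def Svec (v : Fin dB → ℂ) : Matrix (Fin dA) (Fin dA) ℂ := sig (Φ (pmat v)) v

lemma hpure (hc : ∀ A, traceA (Φ A) = A) (hd : ∀ ρ, IsDensity ρ → IsDensity (Φ ρ))
    (v : Fin dB → ℂ) (hv : ∑ k, 𝕔 (v k) * v k = 1) :
    ∀ a i b j, Φ (pmat v) (a, i) (b, j) = Svec Φ v a b * (v i * 𝕔 (v j)) :=
  key_entry (hd _ (pure_density v hv)).1 hv (by simpa [pmat] using hc (pmat v))

lemma hpure_density (hc : ∀ A, traceA (Φ A) = A)
    (hd : ∀ ρ, IsDensity ρ → IsDensity (Φ ρ))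
    (v : Fin dB → ℂ) (hv : ∑ k, 𝕔 (v k) * v k = 1) :
    IsDensity (Svec Φ v) :=
  key_density (hd _ (pure_density v hv)).1 hv (by simpa [pmat] using hc (pmat v))

lemma unit_ss : 𝕔 sC * sC + 𝕔 sC * sC = 1 := by
  rw [sC_conj]; linear_combination 2 * sC_sq

lemma unit_sns : 𝕔 sC * sC + 𝕔 (-sC) * (-sC) = 1 := by
  simp only [map_neg, neg_mul, mul_neg, neg_neg, sC_conj]
  linear_combination 2 * sC_sq

lemma unit_sis : 𝕔 sC * sC + 𝕔 (Complex.I * sC) * (Complex.I * sC) = 1 := by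
  rw [sC_conj, beta2]
  linear_combination sC_sq

lemma unit_snis : 𝕔 sC * sC + 𝕔 (-(Complex.I * sC)) * (-(Complex.I * sC)) = 1 := by
  simp only [map_neg, neg_mul, mul_neg, neg_neg]
  exact unit_sis

lemma pair_eq (hc : ∀ A, traceA (Φ A) = A) (hd : ∀ ρ, IsDensity ρ → IsDensity (Φ ρ))
    {p q : Fin dB} (hpq : p ≠ q) :
    (∀ a b, Svec Φ (ev q) a b = Svec Φ (ev p) a b) ∧
    (∀ a i b j, Φ (Matrix.single p q 1) (a, i) (b, j)
      = Svec Φ (ev p) a b * Matrix.single p q 1 i j) := by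
  have hqp : ¬ q = p := fun h => hpq h.symm
  set w1 := wv p q sC sC with hw1def
  set w2 := wv p q sC (-sC) with hw2def
  set w3 := wv p q sC (Complex.I * sC) with hw3def
  set w4 := wv p q sC (-(Complex.I * sC)) with hw4def
  have hu1 := wv_unit p q hpq sC sC unit_ss
  have hu2 := wv_unit p q hpq sC (-sC) unit_sns
  have hu3 := wv_unit p q hpq sC (Complex.I * sC) unit_sis
  have hu4 := wv_unit p q hpq sC (-(Complex.I * sC)) unit_snis
  have huevp := ev_unit (n := dB) p
  have huevq := ev_unit (n := dB) q
  have P1 := hpure Φ hc hd w1 hu1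
  have P2 := hpure Φ hc hd w2 hu2
  have P3 := hpure Φ hc hd w3 hu3
  have P4 := hpure Φ hc hd w4 hu4
  have Pp := hpure Φ hc hd (ev p) huevp
  have Pq := hpure Φ hc hd (ev q) huevq
  -- vector component values
  have vw1p : w1 p = sC := by simp [hw1def, wv]
  have vw1q : w1 q = sC := by simp [hw1def, wv, hqp]
  have vw2p : w2 p = sC := by simp [hw2def, wv]
  have vw2q : w2 q = -sC := by simp [hw2def, wv, hqp]
  have vw3p : w3 p = sC := by simp [hw3def, wv]
  have vw3q : w3 q = Complex.I * sC := by simp [hw3def, wv, hqp]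
  have vw4p : w4 p = sC := by simp [hw4def, wv]
  have vw4q : w4 q = -(Complex.I * sC) := by simp [hw4def, wv, hqp]
  have vepp : ev (n := dB) p p = 1 := by simp [ev]
  have vepq : ev (n := dB) p q = 0 := by simp [ev, hqp]
  have veqq : ev (n := dB) q q = 1 := by simp [ev]
  have veqp : ev (n := dB) q p = 0 := by simp [ev, hpq]
  -- linearity equation 1
  have f1 : ∀ a i b j, Svec Φ w1 a b * (w1 i * 𝕔 (w1 j)) + Svec Φ w2 a b * (w2 i * 𝕔 (w2 j))
      = Svec Φ (ev p) a b * (ev p i * 𝕔 (ev p j)) + Svec Φ (ev q) a b * (ev q i * 𝕔 (ev q j)) := by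
    intro a i b j
    have hI1 := congrArg (fun X => Φ X) (Ipm p q hpq sC (by rw [sC_conj]; exact sC_sq))
    simp only [map_add] at hI1
    have := congrFun (congrFun hI1 (a, i)) (b, j)
    simp only [Matrix.add_apply] at this
    rw [P1 a i b j, P2 a i b j, Pp a i b j, Pq a i b j] at this
    exact this
  have f2 : ∀ a i b j, Svec Φ w3 a b * (w3 i * 𝕔 (w3 j)) + Svec Φ w4 a b * (w4 i * 𝕔 (w4 j))
      = Svec Φ (ev p) a b * (ev p i * 𝕔 (ev p j)) + Svec Φ (ev q) a b * (ev q i * 𝕔 (ev q j)) := by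
    intro a i b j
    have hI2 := congrArg (fun X => Φ X) (Ipm p q hpq (Complex.I * sC) beta2)
    simp only [map_add] at hI2
    have := congrFun (congrFun hI2 (a, i)) (b, j)
    simp only [Matrix.add_apply] at this
    rw [P3 a i b j, P4 a i b j, Pp a i b j, Pq a i b j] at this
    exact this
  -- evaluated equations
  have gpp : ∀ a b, Svec Φ w1 a b * (sC * sC) + Svec Φ w2 a b * (sC * sC)
      = Svec Φ (ev p) a b := by
    intro a b
    have := f1 a p b p
    rw [vw1p, vw2p, vepp, veqp] at this
    simpa [sC_conj] using this
  have gqq : ∀ a b, Svec Φ w1 a b * (sC * sC) + Svec Φ w2 a b * (sC * sC)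
      = Svec Φ (ev q) a b := by
    intro a b
    have := f1 a q b q
    rw [vw1q, vw2q, vepq, veqq] at this
    simpa [sC_conj] using this
  have hSq : ∀ a b, Svec Φ (ev q) a b = Svec Φ (ev p) a b := by
    intro a b
    rw [← gpp a b, ← gqq a b]
  have gpq : ∀ a b, Svec Φ w1 a b * (sC * sC) - Svec Φ w2 a b * (sC * sC) = 0 := by
    intro a b
    have := f1 a p b q
    rw [vw1p, vw1q, vw2p, vw2q, vepp, vepq, veqp, veqq] at this
    simpa [sC_conj, map_neg, sub_eq_add_neg] using this
  have hSw1 : ∀ a b, Svec Φ w1 a b = Svec Φ (ev p) a b := by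
    intro a b
    linear_combination gpp a b + gpq a b
      + (1 - 2 * Svec Φ w1 a b) * sC_sq - sC_sq
  have g2pp : ∀ a b, Svec Φ w3 a b * (sC * sC) + Svec Φ w4 a b * (sC * sC)
      = Svec Φ (ev p) a b := by
    intro a b
    have := f2 a p b p
    rw [vw3p, vw4p, vepp, veqp] at this
    simpa [sC_conj] using this
  have g2pq : ∀ a b, Svec Φ w3 a b * (sC * sC) - Svec Φ w4 a b * (sC * sC) = 0 := by
    intro a b
    have := f2 a p b q
    rw [vw3p, vw3q, vw4p, vw4q, vepp, vepq, veqp, veqq] at this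
    have h2 : Svec Φ w3 a b * (sC * (-Complex.I * sC))
        + Svec Φ w4 a b * (sC * (Complex.I * sC)) = 0 := by
      simpa [sC_conj, map_neg, _root_.map_mul, Complex.conj_I] using this
    linear_combination Complex.I * h2
      + (sC * sC * (Svec Φ w3 a b - Svec Φ w4 a b)) * Complex.I_sq
  have hSw3 : ∀ a b, Svec Φ w3 a b = Svec Φ (ev p) a b := by
    intro a b
    linear_combination g2pp a b + g2pq a b
      + (1 - 2 * Svec Φ w3 a b) * sC_sq - sC_sq
  refine ⟨hSq, ?_⟩
  intro a i b j
  have hI3 := congrArg (fun X => Φ X) (I3mat p q hpq)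
  simp only [map_add, map_sub, _root_.map_smul, LinearMap.map_smul] at hI3
  have e3 := congrFun (congrFun hI3 (a, i)) (b, j)
  simp only [Matrix.add_apply, Matrix.sub_apply, Matrix.smul_apply, smul_eq_mul] at e3
  rw [P1 a i b j, P3 a i b j, Pp a i b j, Pq a i b j] at e3
  rw [hSw1 a b, hSw3 a b, hSq a b] at e3
  have i3s := congrFun (congrFun (I3mat p q hpq) i) j
  simp only [Matrix.add_apply, Matrix.sub_apply, Matrix.smul_apply, smul_eq_mul,
    pmat_apply] at i3s
  rw [← hw1def, ← hw3def] at i3s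
  linear_combination e3 - Svec Φ (ev p) a b * i3s

lemma pmat_ev (p : Fin dB) : pmat (ev p) = Matrix.single p p (1:ℂ) := by
  ext i j
  simp only [pmat_apply, ev, Matrix.single, Matrix.of_apply]
  by_cases hip : i = p <;> by_cases hjp : j = p <;> simp_all [eq_comm]

lemma linear_ext (ρA : Matrix (Fin dA) (Fin dA) ℂ)
    (h : ∀ p q, Φ (Matrix.single p q 1) = ρA ⊗ₖ Matrix.single p q 1) :
    ∀ B, Φ B = ρA ⊗ₖ B := by
  intro B
  have hB : B = ∑ p : Fin dB, ∑ q : Fin dB, B p q • Matrix.single p q (1:ℂ) := by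
    conv_lhs => rw [Matrix.matrix_eq_sum_single B]
    refine Finset.sum_congr rfl fun p _ => Finset.sum_congr rfl fun q _ => ?_
    rw [Matrix.smul_single, smul_eq_mul, mul_one]
  conv_lhs => rw [hB]
  rw [map_sum]
  simp only [map_sum, _root_.map_smul, LinearMap.map_smul, h]
  ext x y
  obtain ⟨a, i⟩ := x
  obtain ⟨b, j⟩ := y
  simp only [Matrix.sum_apply, Matrix.smul_apply, Matrix.kroneckerMap_apply,
    smul_eq_mul, Matrix.single, Matrix.of_apply, ite_and, mul_ite, mul_zero,
    mul_one, ite_mul, zero_mul, sum_ite_push, Finset.sum_ite_eq', Finset.mem_univ,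
    if_true, Finset.sum_ite_eq, eq_comm]
  try ring

end main

lemma kron_conjT {dA dB : ℕ} (X : Matrix (Fin dA) (Fin dA) ℂ) (Y : Matrix (Fin dB) (Fin dB) ℂ) :
    (X ⊗ₖ Y)ᴴ = Xᴴ ⊗ₖ Yᴴ := by
  ext x y
  obtain ⟨a, i⟩ := x
  obtain ⟨b, j⟩ := y
  simp only [Matrix.conjTranspose_apply, Matrix.kroneckerMap_apply, star_mul']
  try ring

lemma kron_psd {dA dB : ℕ} {X : Matrix (Fin dA) (Fin dA) ℂ} {Y : Matrix (Fin dB) (Fin dB) ℂ}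
    (hX : X.PosSemidef) (hY : Y.PosSemidef) : (X ⊗ₖ Y).PosSemidef := by
  exact Matrix.PosSemidef.kronecker hX hY

end PJ

open PJ in
/-- Pechukas–Jordan: a linear assignment map Φ is consistent
(tr_A ∘ Φ = id) and sends density matrices to density matrices iff it is a product
assignment Φ(ρ_B) = ρ_A ⊗ ρ_B with a fixed density matrix ρ_A. -/
theorem stmt13 {dA dB : ℕ} (hA : 1 ≤ dA) (hB : 2 ≤ dB)
    (Φ : Matrix (Fin dB) (Fin dB) ℂ →ₗ[ℂ]
      Matrix (Fin dA × Fin dB) (Fin dA × Fin dB) ℂ) :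
    ((∀ A, traceA (Φ A) = A) ∧ (∀ ρB, IsDensity ρB → IsDensity (Φ ρB))) ↔
    (∃ ρA : Matrix (Fin dA) (Fin dA) ℂ, IsDensity ρA ∧
      ∀ ρB, IsDensity ρB → Φ ρB = ρA ⊗ₖ ρB) := by
  constructor
  · rintro ⟨hc, hd⟩
    have hz : 0 < dB := by omega
    set z : Fin dB := ⟨0, hz⟩ with hzdef
    refine ⟨Svec Φ (ev z), hpure_density Φ hc hd (ev z) (ev_unit z), ?_⟩
    have hSall : ∀ p a b, Svec Φ (ev p) a b = Svec Φ (ev z) a b := by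
      intro p a b
      by_cases hp : p = z
      · rw [hp]
      · exact (pair_eq Φ hc hd (show z ≠ p from fun h => hp h.symm)).1 a b
    have hstd : ∀ p q, Φ (Matrix.single p q 1)
        = Svec Φ (ev z) ⊗ₖ Matrix.single p q 1 := by
      intro p q
      by_cases hpq : p = q
      · subst hpq
        rw [← pmat_ev p]
        ext x y
        obtain ⟨a, i⟩ := x
        obtain ⟨b, j⟩ := y
        rw [hpure Φ hc hd (ev p) (ev_unit p) a i b j, hSall p a b]
        simp only [Matrix.kroneckerMap_apply, pmat_apply]
        try ring
      · ext x y
        obtain ⟨a, i⟩ := x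
        obtain ⟨b, j⟩ := y
        rw [(pair_eq Φ hc hd hpq).2 a i b j, hSall p a b]
        simp only [Matrix.kroneckerMap_apply]
    intro ρB _hρB
    exact linear_ext Φ _ hstd ρB
  · rintro ⟨ρA, hρA, h⟩
    have hstd : ∀ p q, Φ (Matrix.single p q 1)
        = ρA ⊗ₖ Matrix.single p q 1 := by
      intro p q
      by_cases hpq : p = q
      · subst hpq
        rw [← pmat_ev p]
        exact h _ (pure_density _ (ev_unit p))
      · rw [I3mat p q hpq]
        simp only [map_add, map_sub, _root_.map_smul, LinearMap.map_smul, map_add]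
        rw [h (pmat (wv p q sC sC)) (pure_density _ (wv_unit p q hpq sC sC unit_ss)),
          h (pmat (wv p q sC (Complex.I * sC)))
            (pure_density _ (wv_unit p q hpq sC (Complex.I * sC) unit_sis)),
          h (pmat (ev p)) (pure_density _ (ev_unit p)),
          h (pmat (ev q)) (pure_density _ (ev_unit q))]
        ext x y
        obtain ⟨a, i⟩ := x
        obtain ⟨b, j⟩ := y
        simp only [Matrix.add_apply, Matrix.sub_apply, Matrix.smul_apply, smul_eq_mul,
          Matrix.kroneckerMap_apply, pmat_apply]
        ring
    have hall := linear_ext Φ ρA hstd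
    constructor
    · intro A
      rw [hall A]
      ext i j
      simp only [traceA, Matrix.of_apply, Matrix.kroneckerMap_apply]
      rw [← Finset.sum_mul]
      rw [show (∑ a : Fin dA, ρA a a) = ρA.trace from rfl, hρA.2, one_mul]
    · intro ρB hρB
      rw [hall ρB]
      exact ⟨kron_psd hρA.1 hρB.1,
        by rw [Matrix.trace_kronecker, hρA.2, hρB.2, mul_one]⟩
end
end
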